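/- arXiv:2512.05775 — 5 statements merged into one kernel-verified Lean document; each statement's English description precedes it below -/
import Mathlib

section
/- Let f : ℝ^m → ℝ be differentiable, μ-strongly convex and L-smooth with 0 < μ ≤ L, and let x* ∈ ℝ^m satisfy ∇f(x*) = 0. Then for every stepsize η with 0 < η ≤ 2/(μ + L) and every x ∈ ℝ^m, ‖x − η∇f(x) − x*‖ ≤ (1 − μη)‖x − x*‖. -/
/-!
Write `d = x - x*` and `G = ∇f x - ∇f x*`. Expanding `‖d - η G‖²`, the bound follows from strong
monotonicity `μ ‖d‖² ≤ ⟪G, d⟫` together with the sharper inequality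
`‖G‖² + μ L ‖d‖² ≤ (μ + L) ⟪G, d⟫` (Nesterov, Thm. 2.1.12). The latter is co-coercivity of the
gradient of `h = f - μ/2 ‖·‖²`: the gradient bounds on `f`, integrated along segments, say that
the Bregman divergence of `h` lies between `0` and `(L - μ)/2 ‖·‖²`, and comparing `h` at `q`, `p`
and `q - (∇h q - ∇h p)/(L - μ)` yields `‖∇h q - ∇h p‖² ≤ (L - μ) ⟪∇h q - ∇h p, q - p⟫`.
-/

open RealInnerProductSpace

open Set in
theorem add_add_half_le_of_hasDerivAt {φ φ' : ℝ → ℝ} {c : ℝ}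
    (hφ : ∀ t, HasDerivAt φ (φ' t) t) (h : ∀ t ∈ Ioo (0 : ℝ) 1, c * t ≤ φ' t - φ' 0) :
    φ 0 + φ' 0 + c / 2 ≤ φ 1 := by
  let χ t := φ t - φ' 0 * t - c / 2 * t ^ 2
  have hχ (t : ℝ) : HasDerivAt χ (φ' t - φ' 0 - c * t) t :=
    (((hφ t).sub ((hasDerivAt_id' t).const_mul (φ' 0))).sub
      ((hasDerivAt_pow 2 t).const_mul (c / 2))).congr_deriv (by push_cast; ring)
  have hmono : MonotoneOn χ (Icc 0 1) := by
    refine monotoneOn_of_hasDerivWithinAt_nonneg (convex_Icc 0 1)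
      (HasDerivAt.continuousOn fun t _ => hχ t) (fun t _ => (hχ t).hasDerivWithinAt) ?_
    rw [interior_Icc]
    exact fun t ht => by linarith [h t ht]
  have := hmono (left_mem_Icc.2 zero_le_one) (right_mem_Icc.2 zero_le_one) zero_le_one
  simp only [χ] at this
  linarith

section InnerProductSpace

variable {F : Type*} [NormedAddCommGroup F] [InnerProductSpace ℝ F]

def bregman (f : F → ℝ) (g : F → F) (a b : F) : ℝ := f a - f b - ⟪g b, a - b⟫

theorem bregman_add_bregman (f : F → ℝ) (g : F → F) (a b : F) :
    bregman f g a b + bregman f g b a = ⟪g a - g b, a - b⟫ := by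
  simp only [bregman, inner_sub_left, inner_sub_right]
  ring

theorem bregman_eq_bregman_sub_bregman (f : F → ℝ) (g : F → F) (a b z : F) :
    bregman f g a b = bregman f g z b - bregman f g z a - ⟪g a - g b, z - a⟫ := by
  simp only [bregman, inner_sub_left, inner_sub_right]
  ring

theorem bregman_sub_half_mul_norm_sq (f : F → ℝ) (g : F → F) (μ : ℝ) (a b : F) :
    bregman (fun w => f w - μ / 2 * ‖w‖ ^ 2) (fun w => g w - μ • w) a b
      = bregman f g a b - μ / 2 * ‖a - b‖ ^ 2 := by
  simp only [bregman, norm_sub_sq_real, inner_sub_left, inner_sub_right, real_inner_smul_left,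
    real_inner_self_eq_norm_sq, real_inner_comm a b]
  ring

theorem mul_sq_norm_sub_le_bregman {f : F → ℝ} {g : F → F} {K : ℝ}
    (hlow : ∀ a b, 0 ≤ bregman f g a b) (hup : ∀ a b, bregman f g a b ≤ K / 2 * ‖a - b‖ ^ 2)
    (a b : F) (t : ℝ) :
    (t - K / 2 * t ^ 2) * ‖g a - g b‖ ^ 2 ≤ bregman f g a b := by
  set δ := g a - g b
  have hz : a - t • δ - a = -(t • δ) := by abel
  have h3 := bregman_eq_bregman_sub_bregman f g a b (a - t • δ)
  rw [hz, inner_neg_right, real_inner_smul_right, real_inner_self_eq_norm_sq] at h3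
  have h4 := hup (a - t • δ) a
  rw [hz, norm_neg, norm_smul, mul_pow, Real.norm_eq_abs, sq_abs] at h4
  nlinarith [hlow (a - t • δ) b]

theorem sq_norm_sub_le_mul_inner {f : F → ℝ} {g : F → F} {K : ℝ} (hK : 0 ≤ K)
    (hlow : ∀ a b, 0 ≤ bregman f g a b) (hup : ∀ a b, bregman f g a b ≤ K / 2 * ‖a - b‖ ^ 2)
    (a b : F) :
    ‖g a - g b‖ ^ 2 ≤ K * ⟪g a - g b, a - b⟫ := by
  have hsum (t : ℝ) : (2 * t - K * t ^ 2) * ‖g a - g b‖ ^ 2 ≤ ⟪g a - g b, a - b⟫ := by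
    have h1 := mul_sq_norm_sub_le_bregman hlow hup a b t
    have h2 := mul_sq_norm_sub_le_bregman hlow hup b a t
    rw [norm_sub_rev] at h2
    linarith [bregman_add_bregman f g a b]
  rcases hK.eq_or_lt with rfl | hK
  · have hab := hup a b
    have hba := hup b a
    simp only [zero_div, zero_mul] at hab hba ⊢
    linarith [hsum 1, bregman_add_bregman f g a b, sq_nonneg ‖g a - g b‖]
  · have h := hsum K⁻¹
    rw [show 2 * K⁻¹ - K * K⁻¹ ^ 2 = K⁻¹ by field_simp; ring] at h
    exact (inv_mul_le_iff₀ hK).1 h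

theorem norm_sub_smul_le_of_inner_bounds {d G : F} {μ L η : ℝ} (hμL : μ ≤ L) (hη0 : 0 < η)
    (hη : η ≤ 2 / (μ + L)) (hμ : μ * ‖d‖ ^ 2 ≤ ⟪G, d⟫)
    (hco : ‖G‖ ^ 2 + μ * L * ‖d‖ ^ 2 ≤ (μ + L) * ⟪G, d⟫) :
    ‖d - η • G‖ ≤ (1 - μ * η) * ‖d‖ := by
  have hsum : 0 < μ + L := (div_pos_iff_of_pos_left two_pos).1 (hη0.trans_le hη)
  have hη2 : η * (μ + L) ≤ 2 := (le_div_iff₀ hsum).1 hη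
  have hμη : 0 ≤ 1 - μ * η := by nlinarith
  rw [← pow_le_pow_iff_left₀ (norm_nonneg _) (by positivity) two_ne_zero, norm_sub_sq_real,
    norm_smul, real_inner_smul_right, real_inner_comm, mul_pow, mul_pow, Real.norm_eq_abs, sq_abs]
  have h1 := mul_le_mul_of_nonneg_left hco (sq_nonneg η)
  have h2 := mul_le_mul_of_nonneg_left hμ (by nlinarith : 0 ≤ η * (2 - η * (μ + L)))
  linear_combination h1 + h2

variable [CompleteSpace F] {f : F → ℝ} {g : F → F}

theorem hasDerivAt_comp_add_smul (hg : ∀ x, HasGradientAt f (g x) x) (b d : F) (t : ℝ) :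
    HasDerivAt (fun s : ℝ => f (b + s • d)) ⟪g (b + t • d), d⟫ t := by
  have hline : HasDerivAt (fun s : ℝ => b + s • d) d t := by
    simpa using ((hasDerivAt_id t).smul_const d).const_add b
  simpa [InnerProductSpace.toDual_apply_apply, Function.comp_def] using
    (hasGradientAt_iff_hasFDerivAt.1 (hg (b + t • d))).comp_hasDerivAt t hline

theorem le_bregman_of_le_inner (hg : ∀ x, HasGradientAt f (g x) x) {c : ℝ}
    (hc : ∀ u v, c * ‖u - v‖ ^ 2 ≤ ⟪g u - g v, u - v⟫) (a b : F) :
    c / 2 * ‖a - b‖ ^ 2 ≤ bregman f g a b := by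
  have h := add_add_half_le_of_hasDerivAt (hasDerivAt_comp_add_smul hg b (a - b))
    (c := c * ‖a - b‖ ^ 2) fun t ht => by
      have := hc (b + t • (a - b)) b
      rw [add_sub_cancel_left, norm_smul, inner_smul_right, inner_sub_left, Real.norm_eq_abs,
        abs_of_pos ht.1] at this
      rw [zero_smul, add_zero]
      nlinarith [ht.1]
  simp only [zero_smul, add_zero, one_smul, add_sub_cancel] at h
  rw [bregman]
  linarith

theorem bregman_le_of_inner_le (hg : ∀ x, HasGradientAt f (g x) x) {c : ℝ}
    (hc : ∀ u v, ⟪g u - g v, u - v⟫ ≤ c * ‖u - v‖ ^ 2) (a b : F) :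
    bregman f g a b ≤ c / 2 * ‖a - b‖ ^ 2 := by
  have h := add_add_half_le_of_hasDerivAt (fun t => (hasDerivAt_comp_add_smul hg b (a - b) t).neg)
    (c := -(c * ‖a - b‖ ^ 2)) fun t ht => by
      have := hc (b + t • (a - b)) b
      rw [add_sub_cancel_left, norm_smul, inner_smul_right, inner_sub_left, Real.norm_eq_abs,
        abs_of_pos ht.1] at this
      rw [zero_smul, add_zero]
      nlinarith [ht.1]
  simp only [Pi.neg_apply, zero_smul, add_zero, one_smul, add_sub_cancel] at h
  rw [bregman]
  linarith

theorem sq_norm_sub_add_mul_sq_le_inner (hg : ∀ x, HasGradientAt f (g x) x) {μ L : ℝ}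
    (hμL : μ ≤ L) (hμ : ∀ u v, μ * ‖u - v‖ ^ 2 ≤ ⟪g u - g v, u - v⟫)
    (hL : ∀ u v, ⟪g u - g v, u - v⟫ ≤ L * ‖u - v‖ ^ 2) (a b : F) :
    ‖g a - g b‖ ^ 2 + μ * L * ‖a - b‖ ^ 2 ≤ (μ + L) * ⟪g a - g b, a - b⟫ := by
  have hco := sq_norm_sub_le_mul_inner (f := fun w => f w - μ / 2 * ‖w‖ ^ 2)
    (g := fun w => g w - μ • w) (sub_nonneg.2 hμL)
    (fun u v => by rw [bregman_sub_half_mul_norm_sq]; linarith [le_bregman_of_le_inner hg hμ u v])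
    (fun u v => by rw [bregman_sub_half_mul_norm_sq]; linarith [bregman_le_of_inner_le hg hL u v])
    a b
  have hG : g a - μ • a - (g b - μ • b) = g a - g b - μ • (a - b) := by rw [smul_sub]; abel
  rw [hG] at hco
  generalize g a - g b = δ at hco ⊢
  generalize a - b = e at hco ⊢
  rw [norm_sub_sq_real, inner_sub_left, norm_smul, mul_pow, Real.norm_eq_abs, sq_abs,
    real_inner_smul_right, real_inner_smul_left, real_inner_self_eq_norm_sq] at hco
  linear_combination hco

end InnerProductSpace

theorem statement1_general {m : ℕ} (f : EuclideanSpace ℝ (Fin m) → ℝ) (L μ : ℝ)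
    (hμL : μ ≤ L)
    (hdiff : Differentiable ℝ f)
    (hsmooth : ∀ u v : EuclideanSpace ℝ (Fin m),
      ‖gradient f u - gradient f v‖ ≤ L * ‖u - v‖)
    (hsc : ∀ u v : EuclideanSpace ℝ (Fin m),
      ⟪gradient f u - gradient f v, u - v⟫ ≥ μ * ‖u - v‖ ^ 2)
    (xstar : EuclideanSpace ℝ (Fin m)) (hstat : gradient f xstar = 0)
    (η : ℝ) (hη0 : 0 < η) (hη : η ≤ 2 / (μ + L))
    (x : EuclideanSpace ℝ (Fin m)) :
    ‖x - η • gradient f x - xstar‖ ≤ (1 - μ * η) * ‖x - xstar‖ := by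
  have hL (u v : EuclideanSpace ℝ (Fin m)) :
      ⟪gradient f u - gradient f v, u - v⟫ ≤ L * ‖u - v‖ ^ 2 := by
    rw [sq, ← mul_assoc]
    exact (real_inner_le_norm _ _).trans (mul_le_mul_of_nonneg_right (hsmooth u v) (norm_nonneg _))
  have hco := sq_norm_sub_add_mul_sq_le_inner (fun y => (hdiff y).hasGradientAt) hμL hsc hL x xstar
  have hμ := hsc x xstar
  rw [hstat, sub_zero] at hco hμ
  rw [sub_right_comm]
  exact norm_sub_smul_le_of_inner_bounds hμL hη0 hη hμ hco

/-- For a differentiable, `μ`-strongly convex and `L`-smooth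
function `f : ℝ^m → ℝ` with `0 < μ ≤ L`, a stationary point `x*` (`∇f(x*) = 0`)
and any stepsize `0 < η ≤ 2/(μ+L)`:
`‖x − η ∇f(x) − x*‖ ≤ (1 − μη) ‖x − x*‖` for every `x`. -/
theorem statement1 {m : ℕ} (f : EuclideanSpace ℝ (Fin m) → ℝ) (L μ : ℝ)
    (hμ : 0 < μ) (hμL : μ ≤ L)
    (hdiff : Differentiable ℝ f)
    (hsmooth : ∀ u v : EuclideanSpace ℝ (Fin m),
      ‖gradient f u - gradient f v‖ ≤ L * ‖u - v‖)
    (hsc : ∀ u v : EuclideanSpace ℝ (Fin m),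
      ⟪gradient f u - gradient f v, u - v⟫ ≥ μ * ‖u - v‖ ^ 2)
    (xstar : EuclideanSpace ℝ (Fin m)) (hstat : gradient f xstar = 0)
    (η : ℝ) (hη0 : 0 < η) (hη : η ≤ 2 / (μ + L))
    (x : EuclideanSpace ℝ (Fin m)) :
    ‖x - η • gradient f x - xstar‖ ≤ (1 - μ * η) * ‖x - xstar‖ :=
  statement1_general f L μ hμL hdiff hsmooth hsc xstar hstat η hη0 hη x
end

section
/- Let x ∈ ℝ^m with x ≠ 0 and let s be a positive integer. Define the stochastic quantizer C_Q(x) as the random vector with independent coordinates such that, setting ℓ_i := ⌊s|x_i|/‖x‖⌋ and δ_i := s|x_i|/‖x‖ − ℓ_i, the i-th coordinate of C_Q(x) equals (‖x‖/s)·sgn(x_i)·(ℓ_i + 1) with probability δ_i and equals (‖x‖/s)·sgn(x_i)·ℓ_i with probability 1 − δ_i. Then E[C_Q(x)] = x and E[‖C_Q(x) − x‖²] ≤ min{m/s², √m/s}·‖x‖². -/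
/-
Each coordinate of `C_Q(x)` is one of the two endpoints of the cell of width `‖x‖/s` containing
`x_i`, chosen with the probabilities that make it unbiased; its variance is then
`(‖x‖/s)² δ_i (1 - δ_i)`. Summing over the coordinates, `δ_i (1 - δ_i) ≤ 1` gives the bound
`m/s² ‖x‖²`, while `δ_i (1 - δ_i) ≤ δ_i ≤ s |x_i| / ‖x‖` together with Cauchy–Schwarz,
`∑ |x_i| ≤ √m ‖x‖`, gives `√m/s ‖x‖²`.
-/

open MeasureTheory

namespace StochasticQuantizer

variable {m : ℕ}

/-- `ℓ_i = ⌊ s |x_i| / ‖x‖ ⌋`. -/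
noncomputable def ell (s : ℕ) (x : EuclideanSpace ℝ (Fin m)) (i : Fin m) : ℤ :=
  ⌊(s : ℝ) * |x i| / ‖x‖⌋

/-- `δ_i = s |x_i| / ‖x‖ − ℓ_i`. -/
noncomputable def delta (s : ℕ) (x : EuclideanSpace ℝ (Fin m)) (i : Fin m) : ℝ :=
  (s : ℝ) * |x i| / ‖x‖ - (ell s x i : ℝ)

/-- The low quantization value `(‖x‖/s) sgn(x_i) ℓ_i`. -/
noncomputable def low (s : ℕ) (x : EuclideanSpace ℝ (Fin m)) (i : Fin m) : ℝ :=
  ‖x‖ / (s : ℝ) * Real.sign (x i) * (ell s x i : ℝ)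

/-- The high quantization value `(‖x‖/s) sgn(x_i) (ℓ_i + 1)`. -/
noncomputable def high (s : ℕ) (x : EuclideanSpace ℝ (Fin m)) (i : Fin m) : ℝ :=
  ‖x‖ / (s : ℝ) * Real.sign (x i) * ((ell s x i : ℝ) + 1)

/-- Distribution of the `i`-th coordinate of the stochastic quantizer: it takes the
value `high` with probability `δ_i` and the value `low` with probability `1 − δ_i`. -/
noncomputable def coordLaw (s : ℕ) (x : EuclideanSpace ℝ (Fin m)) (i : Fin m) :
    Measure ℝ :=
  Real.toNNReal (1 - delta s x i) • Measure.dirac (low s x i) +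
    Real.toNNReal (delta s x i) • Measure.dirac (high s x i)

instance (s : ℕ) (x : EuclideanSpace ℝ (Fin m)) (i : Fin m) :
    IsFiniteMeasure (coordLaw s x i) := by
  unfold coordLaw; infer_instance

/-- The law of the stochastic quantizer `C_Q(x)`: its coordinates are independent,
the `i`-th coordinate distributed according to `coordLaw`. -/
noncomputable def quantizerLaw (s : ℕ) (x : EuclideanSpace ℝ (Fin m)) :
    Measure (EuclideanSpace ℝ (Fin m)) :=
  (Measure.pi (coordLaw s x)).map (MeasurableEquiv.toLp 2 (Fin m → ℝ))

end StochasticQuantizer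

namespace Real

theorem sign_mul_abs (r : ℝ) : sign r * |r| = r := by
  rcases lt_trichotomy r 0 with h | rfl | h
  · rw [sign_of_neg h, abs_of_neg h, neg_one_mul, neg_neg]
  · rw [abs_zero, mul_zero]
  · rw [sign_of_pos h, abs_of_pos h, one_mul]

theorem sign_sq_le_one (r : ℝ) : sign r ^ 2 ≤ 1 := by
  rcases sign_apply_eq r with h | h | h <;> norm_num [h]

end Real

namespace EuclideanSpace

theorem sum_abs_le_sqrt_card_mul_norm {ι : Type*} [Fintype ι] (x : EuclideanSpace ℝ ι) :
    ∑ i, |x i| ≤ √(Fintype.card ι) * ‖x‖ := by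
  simpa [EuclideanSpace.norm_eq, mul_comm] using
    Real.sum_mul_le_sqrt_mul_sqrt Finset.univ (fun i ↦ |x i|) (fun _ ↦ 1)

end EuclideanSpace

namespace MeasureTheory

section TwoPointLaw

variable {α E : Type*} [MeasurableSpace α] [NormedAddCommGroup E] {p : ℝ} {a b : α}

theorem integrable_twoPointLaw [MeasurableSingletonClass α] (f : α → E) :
    Integrable f ((1 - p).toNNReal • Measure.dirac a + p.toNNReal • Measure.dirac b) :=
  .add_measure (.smul_measure (integrable_dirac enorm_lt_top) ENNReal.coe_ne_top)
    (.smul_measure (integrable_dirac enorm_lt_top) ENNReal.coe_ne_top)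

theorem integral_twoPointLaw [MeasurableSingletonClass α] [NormedSpace ℝ E] [CompleteSpace E]
    (hp₀ : 0 ≤ p) (hp₁ : p ≤ 1) (f : α → E) :
    ∫ t, f t ∂((1 - p).toNNReal • Measure.dirac a + p.toNNReal • Measure.dirac b)
      = (1 - p) • f a + p • f b := by
  rw [integral_add_measure
      (.smul_measure (integrable_dirac enorm_lt_top) ENNReal.coe_ne_top)
      (.smul_measure (integrable_dirac enorm_lt_top) ENNReal.coe_ne_top),
    integral_smul_nnreal_measure, integral_smul_nnreal_measure, integral_dirac, integral_dirac,
    NNReal.smul_def, NNReal.smul_def, Real.coe_toNNReal _ (sub_nonneg.2 hp₁),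
    Real.coe_toNNReal _ hp₀]

theorem isProbabilityMeasure_twoPointLaw (hp₀ : 0 ≤ p) (hp₁ : p ≤ 1) :
    IsProbabilityMeasure ((1 - p).toNNReal • Measure.dirac a + p.toNNReal • Measure.dirac b) := by
  constructor
  rw [Measure.add_apply, Measure.smul_apply, Measure.smul_apply, measure_univ, measure_univ,
    ENNReal.smul_def, ENNReal.smul_def, smul_eq_mul, smul_eq_mul, mul_one, mul_one,
    ← ENNReal.coe_add, ← Real.toNNReal_add (sub_nonneg.2 hp₁) hp₀, sub_add_cancel,
    Real.toNNReal_one, ENNReal.coe_one]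

end TwoPointLaw

section IndependentCoordinates

variable {ι : Type*} [Fintype ι] {ν : ι → Measure ℝ} [∀ i, IsProbabilityMeasure (ν i)]

theorem integral_map_toLp_pi (hν : ∀ i, Integrable id (ν i)) :
    ∫ y, y ∂(Measure.pi ν).map (MeasurableEquiv.toLp 2 (ι → ℝ))
      = WithLp.toLp 2 (fun i ↦ ∫ t, t ∂ν i) := by
  rw [integral_map (f := fun y ↦ y) (MeasurableEquiv.measurable _).aemeasurable
    aestronglyMeasurable_id, MeasurableEquiv.coe_toLp]
  ext i
  rw [eval_integral_piLp (f := fun z : ι → ℝ ↦ WithLp.toLp 2 z)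
    (fun j ↦ integrable_comp_eval (μ := ν) (f := id) (hν j)) i]
  exact integral_comp_eval (μ := ν) (f := id) aestronglyMeasurable_id

theorem integral_norm_sub_sq_map_toLp_pi (c : EuclideanSpace ℝ ι)
    (hν : ∀ i, Integrable (fun t ↦ (t - c i) ^ 2) (ν i)) :
    ∫ y, ‖y - c‖ ^ 2 ∂(Measure.pi ν).map (MeasurableEquiv.toLp 2 (ι → ℝ))
      = ∑ i, ∫ t, (t - c i) ^ 2 ∂ν i := by
  rw [integral_map (MeasurableEquiv.measurable _).aemeasurable (by fun_prop)]
  simp only [EuclideanSpace.norm_sq_eq, MeasurableEquiv.coe_toLp, PiLp.sub_apply,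
    Real.norm_eq_abs, sq_abs]
  rw [integral_finsetSum Finset.univ (f := fun i (z : ι → ℝ) ↦ (z i - c i) ^ 2)
    fun i _ ↦ integrable_comp_eval (μ := ν) (hν i)]
  exact Finset.sum_congr rfl fun i _ ↦ integral_comp_eval (μ := ν) (hν i).aestronglyMeasurable

end IndependentCoordinates

end MeasureTheory

namespace StochasticQuantizer

open Finset

variable {m : ℕ}

section Coordinate

variable (s : ℕ) (x : EuclideanSpace ℝ (Fin m)) (i : Fin m)

theorem delta_nonneg : 0 ≤ delta s x i := Int.fract_nonneg _

theorem delta_le_one : delta s x i ≤ 1 := (Int.fract_lt_one _).le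

theorem delta_le : delta s x i ≤ s * |x i| / ‖x‖ :=
  sub_le_self _ (Int.cast_nonneg (Int.floor_nonneg.2 (by positivity)))

instance : IsProbabilityMeasure (coordLaw s x i) :=
  isProbabilityMeasure_twoPointLaw (delta_nonneg s x i) (delta_le_one s x i)

theorem integral_coordLaw {E : Type*} [NormedAddCommGroup E] [NormedSpace ℝ E] [CompleteSpace E]
    (f : ℝ → E) :
    ∫ t, f t ∂coordLaw s x i
      = (1 - delta s x i) • f (low s x i) + delta s x i • f (high s x i) :=
  integral_twoPointLaw (delta_nonneg s x i) (delta_le_one s x i) f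

noncomputable def signedStep : ℝ := ‖x‖ / s * Real.sign (x i)

theorem low_eq_signedStep_mul : low s x i = signedStep s x i * ell s x i := rfl

theorem high_eq_signedStep_mul : high s x i = signedStep s x i * (ell s x i + 1) := rfl

theorem signedStep_mul_ell_add_delta (hs : s ≠ 0) :
    signedStep s x i * (ell s x i + delta s x i) = x i := by
  rcases eq_or_ne ‖x‖ 0 with hx | hx
  · simp [signedStep, norm_eq_zero.1 hx]
  · rw [signedStep, delta, add_sub_cancel]
    conv_rhs => rw [← Real.sign_mul_abs (x i)]
    field_simp

theorem integral_id_coordLaw (hs : s ≠ 0) : ∫ t, t ∂coordLaw s x i = x i := by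
  rw [integral_coordLaw, smul_eq_mul, smul_eq_mul, low_eq_signedStep_mul,
    high_eq_signedStep_mul]
  linear_combination signedStep_mul_ell_add_delta s x i hs

theorem integral_sq_sub_coordLaw (hs : s ≠ 0) :
    ∫ t, (t - x i) ^ 2 ∂coordLaw s x i
      = signedStep s x i ^ 2 * (delta s x i * (1 - delta s x i)) := by
  rw [integral_coordLaw, smul_eq_mul, smul_eq_mul, low_eq_signedStep_mul,
    high_eq_signedStep_mul]
  -- The two sides differ by the squared bias `(signedStep * (ℓ + δ) - x i) ^ 2`, which vanishes.
  linear_combination (signedStep s x i * (ell s x i + delta s x i) - x i) *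
    signedStep_mul_ell_add_delta s x i hs

theorem signedStep_sq_le : signedStep s x i ^ 2 ≤ (‖x‖ / s) ^ 2 := by
  rw [signedStep, mul_pow]
  exact mul_le_of_le_one_right (sq_nonneg _) (Real.sign_sq_le_one _)

theorem integral_sq_sub_coordLaw_le_sq (hs : s ≠ 0) :
    ∫ t, (t - x i) ^ 2 ∂coordLaw s x i ≤ (‖x‖ / s) ^ 2 := by
  have h₀ := delta_nonneg s x i
  have h₁ := delta_le_one s x i
  rw [integral_sq_sub_coordLaw s x i hs]
  calc signedStep s x i ^ 2 * (delta s x i * (1 - delta s x i))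
      ≤ (‖x‖ / s) ^ 2 * 1 :=
        mul_le_mul (signedStep_sq_le s x i) (by nlinarith) (by nlinarith) (sq_nonneg _)
    _ = (‖x‖ / s) ^ 2 := mul_one _

theorem integral_sq_sub_coordLaw_le_mul_abs (hs : s ≠ 0) :
    ∫ t, (t - x i) ^ 2 ∂coordLaw s x i ≤ ‖x‖ * |x i| / s := by
  have h₀ := delta_nonneg s x i
  have h₁ := delta_le_one s x i
  rw [integral_sq_sub_coordLaw s x i hs]
  calc signedStep s x i ^ 2 * (delta s x i * (1 - delta s x i))
      ≤ (‖x‖ / s) ^ 2 * (s * |x i| / ‖x‖) :=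
        mul_le_mul (signedStep_sq_le s x i) (by nlinarith [delta_le s x i]) (by nlinarith)
          (sq_nonneg _)
    _ = ‖x‖ * |x i| / s := by
        rcases eq_or_ne ‖x‖ 0 with hx | hx
        · simp [hx]
        · field_simp

end Coordinate

theorem statement7_general {m : ℕ} (s : ℕ) (hs : 0 < s)
    (x : EuclideanSpace ℝ (Fin m)) :
    (∫ y, y ∂(quantizerLaw s x)) = x ∧
      ∫ y, ‖y - x‖ ^ 2 ∂(quantizerLaw s x) ≤
        min ((m : ℝ) / (s : ℝ) ^ 2) (Real.sqrt m / (s : ℝ)) * ‖x‖ ^ 2 := by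
  constructor
  · rw [quantizerLaw, integral_map_toLp_pi (ν := coordLaw s x) fun i ↦ integrable_twoPointLaw id]
    ext i
    exact integral_id_coordLaw s x i hs.ne'
  · rw [quantizerLaw,
      integral_norm_sub_sq_map_toLp_pi (ν := coordLaw s x) x fun i ↦ integrable_twoPointLaw _,
      min_mul_of_nonneg _ _ (sq_nonneg ‖x‖)]
    refine le_min ?_ ?_
    · calc ∑ i, ∫ t, (t - x i) ^ 2 ∂coordLaw s x i
          ≤ ∑ _i : Fin m, (‖x‖ / s) ^ 2 :=
            sum_le_sum fun i _ ↦ integral_sq_sub_coordLaw_le_sq s x i hs.ne'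
        _ = m / s ^ 2 * ‖x‖ ^ 2 := by
            rw [sum_const, card_univ, Fintype.card_fin, nsmul_eq_mul]
            ring
    · calc ∑ i, ∫ t, (t - x i) ^ 2 ∂coordLaw s x i
          ≤ ∑ i, ‖x‖ * |x i| / s :=
            sum_le_sum fun i _ ↦ integral_sq_sub_coordLaw_le_mul_abs s x i hs.ne'
        _ = ‖x‖ / s * ∑ i, |x i| := by
            rw [mul_sum]
            exact sum_congr rfl fun i _ ↦ by ring
        _ ≤ ‖x‖ / s * (√m * ‖x‖) := by
            gcongr
            simpa using EuclideanSpace.sum_abs_le_sqrt_card_mul_norm x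
        _ = √m / s * ‖x‖ ^ 2 := by ring

/-- For `x ≠ 0` in `ℝ^m` and a positive integer `s`, the stochastic
quantizer `C_Q(x)` is unbiased, `E[C_Q(x)] = x`, and satisfies
`E ‖C_Q(x) − x‖² ≤ min {m/s², √m/s} ‖x‖²`. -/
theorem statement7 {m : ℕ} (s : ℕ) (hs : 0 < s)
    (x : EuclideanSpace ℝ (Fin m)) (hx : x ≠ 0) :
    (∫ y, y ∂(quantizerLaw s x)) = x ∧
      ∫ y, ‖y - x‖ ^ 2 ∂(quantizerLaw s x) ≤
        min ((m : ℝ) / (s : ℝ) ^ 2) (Real.sqrt m / (s : ℝ)) * ‖x‖ ^ 2 :=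
  statement7_general s hs x

end StochasticQuantizer
end

section
/- Let x ∈ ℝ^m, let 1 ≤ k ≤ m, and let S ⊆ {1, …, m} with |S| = k be such that |x_i| ≥ |x_j| for all i ∈ S and j ∉ S. Define the Top-k operator C(x) ∈ ℝ^m by (C(x))_i = x_i for i ∈ S and (C(x))_i = 0 for i ∉ S. Then ‖C(x) − x‖² ≤ (1 − k/m)·‖x‖². -/
open Finset

section TopK

variable {ι : Type*} [Fintype ι] [DecidableEq ι]

/-- Both sides are sums over `S ×ˢ Sᶜ`, of `f j` and of `f i` respectively. -/
theorem card_mul_sum_compl_le_card_compl_mul_sum (S : Finset ι) (f : ι → ℝ)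
    (htop : ∀ i ∈ S, ∀ j ∉ S, f j ≤ f i) :
    (#S : ℝ) * ∑ j ∈ Sᶜ, f j ≤ (#Sᶜ : ℝ) * ∑ i ∈ S, f i := by
  calc (#S : ℝ) * ∑ j ∈ Sᶜ, f j = ∑ _i ∈ S, ∑ j ∈ Sᶜ, f j := by
        rw [sum_const, nsmul_eq_mul]
    _ ≤ ∑ i ∈ S, ∑ _j ∈ Sᶜ, f i :=
        sum_le_sum fun i hi => sum_le_sum fun j hj => htop i hi j (mem_compl.mp hj)
    _ = (#Sᶜ : ℝ) * ∑ i ∈ S, f i := by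
        rw [mul_sum]
        exact sum_congr rfl fun i _ => by rw [sum_const, nsmul_eq_mul]

theorem sum_compl_le_one_sub_card_div_mul_sum (S : Finset ι) (f : ι → ℝ)
    (htop : ∀ i ∈ S, ∀ j ∉ S, f j ≤ f i) :
    ∑ j ∈ Sᶜ, f j ≤ (1 - (#S : ℝ) / Fintype.card ι) * ∑ i, f i := by
  rcases isEmpty_or_nonempty ι with hι | hι
  · simp [eq_empty_of_isEmpty Sᶜ]
  have hn : (0 : ℝ) < Fintype.card ι := by exact_mod_cast Fintype.card_pos
  have hcompl : (#Sᶜ : ℝ) = Fintype.card ι - #S := by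
    rw [card_compl, Nat.cast_sub (card_le_univ S)]
  have hkey := card_mul_sum_compl_le_card_compl_mul_sum S f htop
  rw [hcompl] at hkey
  rw [← sum_add_sum_compl S f, one_sub_div hn.ne', div_mul_eq_mul_div, le_div_iff₀ hn]
  nlinarith

end TopK

theorem EuclideanSpace.norm_sq_eq_sum_sq {ι : Type*} [Fintype ι] (y : EuclideanSpace ℝ ι) :
    ‖y‖ ^ 2 = ∑ i, y i ^ 2 := by
  simp only [EuclideanSpace.norm_sq_eq, Real.norm_eq_abs, sq_abs]

theorem statement8_general {m : ℕ} (k : ℕ)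
    (x : EuclideanSpace ℝ (Fin m))
    (S : Finset (Fin m)) (hS : S.card = k)
    (htop : ∀ i ∈ S, ∀ j ∉ S, |x j| ≤ |x i|)
    (Cx : EuclideanSpace ℝ (Fin m)) (hCx : ∀ i, Cx i = if i ∈ S then x i else 0) :
    ‖Cx - x‖ ^ 2 ≤ (1 - (k : ℝ) / (m : ℝ)) * ‖x‖ ^ 2 := by
  have herr : ‖Cx - x‖ ^ 2 = ∑ j ∈ Sᶜ, x j ^ 2 := by
    rw [EuclideanSpace.norm_sq_eq_sum_sq, ← sum_add_sum_compl S,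
      sum_eq_zero fun i hi => by simp [hCx, hi], zero_add]
    exact sum_congr rfl fun j hj => by simp [hCx, mem_compl.mp hj]
  have hsq : ∀ i ∈ S, ∀ j ∉ S, x j ^ 2 ≤ x i ^ 2 := fun i hi j hj => sq_le_sq.mpr (htop i hi j hj)
  rw [herr, EuclideanSpace.norm_sq_eq_sum_sq, ← hS]
  simpa using sum_compl_le_one_sub_card_div_mul_sum S (fun i => x i ^ 2) hsq

/-- Let `x ∈ ℝ^m`, `1 ≤ k ≤ m`, and let `S` be a set of `k`
coordinates carrying the `k` largest absolute values of `x`. The Top-`k` operator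
`C(x)` keeps the coordinates in `S` and zeroes out the rest; then
`‖C(x) − x‖² ≤ (1 − k/m) ‖x‖²`. -/
theorem statement8 {m : ℕ} (k : ℕ) (hk1 : 1 ≤ k) (hkm : k ≤ m)
    (x : EuclideanSpace ℝ (Fin m))
    (S : Finset (Fin m)) (hS : S.card = k)
    (htop : ∀ i ∈ S, ∀ j ∉ S, |x j| ≤ |x i|)
    (Cx : EuclideanSpace ℝ (Fin m)) (hCx : ∀ i, Cx i = if i ∈ S then x i else 0) :
    ‖Cx - x‖ ^ 2 ≤ (1 - (k : ℝ) / (m : ℝ)) * ‖x‖ ^ 2 :=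
  statement8_general k x S hS htop Cx hCx
end

section
/- Let W ∈ ℝ^{n×n} be symmetric doubly stochastic, η > 0, W_η := I − η(I − W), ρ_η := ‖W_η − (1/n)𝟙𝟙ᵀ‖ with 0 < ρ_η < 1, w₁ := 1 + ρ_η², w₂ := 1 − ρ_η². Let ω ≥ 0, and let X, Y, H, X̃ be square-integrable random n×m matrices with E[‖X − X̃‖²] ≤ ω·E[‖X − H‖²]. Set X⁺ := W_η·X − η·Y + η(I − W)(X − X̃). Then E[‖X⁺ − X̄⁺‖²] ≤ (w₁/2)·E[‖X − X̄‖²] + (2w₁η²/w₂)·E[‖Y − Ȳ‖²] + (8η²ωw₁/w₂)·E[‖X − H‖²]. -/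
open MeasureTheory Finset

/-- Squared Frobenius norm of a real matrix. -/
def frobSq {n m : ℕ} (M : Matrix (Fin n) (Fin m) ℝ) : ℝ := ∑ i, ∑ j, (M i j) ^ 2

/-- The matrix each of whose rows is the average of the rows of `M`. -/
noncomputable def rowAvg {n m : ℕ} (M : Matrix (Fin n) (Fin m) ℝ) :
    Matrix (Fin n) (Fin m) ℝ :=
  Matrix.of fun _ j => (n : ℝ)⁻¹ * ∑ i, M i j

/-- Spectral norm (ℓ²-operator norm) of a real square matrix. -/
noncomputable def specNorm {n : ℕ} (M : Matrix (Fin n) (Fin n) ℝ) : ℝ :=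
  ‖Matrix.toEuclideanCLM (𝕜 := ℝ) M‖

open Matrix

/-
With `J = (1/n)𝟙𝟙ᵀ` and `W_η = I - η(I - W)`, double stochasticity gives `J W_η = W_η J = J` and
`J (I - W) = 0`, so the consensus error splits as
`X⁺ - X̄⁺ = (W_η - J)(X - X̄) + η((I - W)(X - X̃) - (Y - Ȳ))`.
The first term contracts by `ρ_η`; in the second, `‖(I - W) Z‖² ≤ 4‖Z‖²` since `W` averages.
Young's inequality `‖a + b‖² ≤ (1 + β)‖a‖² + (1 + β⁻¹)‖b‖²` with `β = (1 - ρ_η²)/(2ρ_η²)` turns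
`(1 + β)ρ_η²` into `w₁/2` and `1 + β⁻¹` into `w₁/w₂`; integrating and using the compression bound
on `E‖X - X̃‖²` gives the claim.
-/

section FrobSq

variable {n m : ℕ}

lemma frobSq_nonneg (M : Matrix (Fin n) (Fin m) ℝ) : 0 ≤ frobSq M := by
  unfold frobSq
  positivity

lemma frobSq_eq_sum_col (M : Matrix (Fin n) (Fin m) ℝ) :
    frobSq M = ∑ j, ∑ i, M i j ^ 2 :=
  Finset.sum_comm

lemma frobSq_smul (c : ℝ) (M : Matrix (Fin n) (Fin m) ℝ) :
    frobSq (c • M) = c ^ 2 * frobSq M := by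
  simp [frobSq, Finset.mul_sum, mul_pow]

lemma frobSq_add_le (A B : Matrix (Fin n) (Fin m) ℝ) {β : ℝ} (hβ : 0 < β) :
    frobSq (A + B) ≤ (1 + β) * frobSq A + (1 + β⁻¹) * frobSq B := by
  simp only [frobSq, Matrix.add_apply, Finset.mul_sum, ← Finset.sum_add_distrib]
  gcongr with i _ j _
  have hββ : β⁻¹ * β = 1 := inv_mul_cancel₀ hβ.ne'
  nlinarith [mul_nonneg (inv_nonneg.2 hβ.le) (sq_nonneg (β * A i j - B i j))]

lemma frobSq_sub_le (A B : Matrix (Fin n) (Fin m) ℝ) :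
    frobSq (A - B) ≤ 2 * frobSq A + 2 * frobSq B := by
  simp only [frobSq, Matrix.sub_apply, Finset.mul_sum, ← Finset.sum_add_distrib]
  gcongr with i _ j _
  nlinarith [sq_nonneg (A i j + B i j)]

lemma frobSq_add_le_of_le_sq_mul {ρ u : ℝ} (hρ0 : 0 < ρ) (hρ1 : ρ < 1)
    {A B : Matrix (Fin n) (Fin m) ℝ} (hA : frobSq A ≤ ρ ^ 2 * u) :
    frobSq (A + B) ≤ (1 + ρ ^ 2) / 2 * u + (1 + ρ ^ 2) / (1 - ρ ^ 2) * frobSq B := by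
  have hρsq : 0 < 1 - ρ ^ 2 := by nlinarith
  set β := (1 - ρ ^ 2) / (2 * ρ ^ 2) with hβ_def
  have hβ : 0 < β := by positivity
  have hβA : (1 + β) * ρ ^ 2 = (1 + ρ ^ 2) / 2 := by
    rw [hβ_def]
    field_simp
    ring
  have hβB : 1 + β⁻¹ = (1 + ρ ^ 2) / (1 - ρ ^ 2) := by
    rw [hβ_def, inv_div]
    field_simp
    ring
  calc frobSq (A + B) ≤ (1 + β) * frobSq A + (1 + β⁻¹) * frobSq B := frobSq_add_le A B hβ
    _ ≤ (1 + β) * (ρ ^ 2 * u) + (1 + β⁻¹) * frobSq B := by gcongr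
    _ = (1 + ρ ^ 2) / 2 * u + (1 + ρ ^ 2) / (1 - ρ ^ 2) * frobSq B := by
      rw [← mul_assoc, hβA, hβB]

lemma sum_mulVec_sq_le (A : Matrix (Fin n) (Fin n) ℝ) (v : Fin n → ℝ) :
    ∑ i, (A *ᵥ v) i ^ 2 ≤ specNorm A ^ 2 * ∑ i, v i ^ 2 := by
  have h := pow_le_pow_left₀ (norm_nonneg _)
    ((Matrix.toEuclideanCLM (𝕜 := ℝ) A).le_opNorm (WithLp.toLp 2 v)) 2
  rwa [mul_pow, Matrix.toEuclideanCLM_toLp, EuclideanSpace.real_norm_sq_eq,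
    EuclideanSpace.real_norm_sq_eq] at h

lemma frobSq_mul_le_specNorm_sq (A : Matrix (Fin n) (Fin n) ℝ) (M : Matrix (Fin n) (Fin m) ℝ) :
    frobSq (A * M) ≤ specNorm A ^ 2 * frobSq M := by
  rw [frobSq_eq_sum_col, frobSq_eq_sum_col, Finset.mul_sum]
  gcongr with j _
  exact sum_mulVec_sq_le A fun k => M k j

lemma frobSq_rowAvg_le (M : Matrix (Fin n) (Fin m) ℝ) : frobSq (rowAvg M) ≤ frobSq M := by
  rcases Nat.eq_zero_or_pos n with rfl | hn
  · simp [frobSq]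
  rw [frobSq_eq_sum_col, frobSq_eq_sum_col]
  refine Finset.sum_le_sum fun j _ => ?_
  have hcs : (∑ i, M i j) ^ 2 ≤ n * ∑ i, M i j ^ 2 := by
    simpa using sq_sum_le_card_mul_sum_sq (s := Finset.univ) (f := fun i => M i j)
  calc ∑ _i : Fin n, ((n : ℝ)⁻¹ * ∑ k, M k j) ^ 2 = (n : ℝ)⁻¹ * (∑ k, M k j) ^ 2 := by
        simp only [Finset.sum_const, Finset.card_univ, Fintype.card_fin, nsmul_eq_mul]
        field_simp
    _ ≤ (n : ℝ)⁻¹ * (n * ∑ i, M i j ^ 2) := by gcongr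
    _ = ∑ i, M i j ^ 2 := by field_simp

end FrobSq

section DoublyStochastic

variable {n m : ℕ} {W : Matrix (Fin n) (Fin n) ℝ}

lemma frobSq_mul_le_of_mem_doublyStochastic (hW : W ∈ doublyStochastic ℝ (Fin n))
    (M : Matrix (Fin n) (Fin m) ℝ) : frobSq (W * M) ≤ frobSq M := by
  have jensen : ∀ i j, (W * M) i j ^ 2 ≤ ∑ k, W i k * M k j ^ 2 := fun i j => by
    simpa [Matrix.mul_apply] using (even_two.convexOn_pow (𝕜 := ℝ)).map_sum_le
      (fun k _ => nonneg_of_mem_doublyStochastic hW) (sum_row_of_mem_doublyStochastic hW i)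
      (p := fun k => M k j) (fun _ _ => Set.mem_univ _)
  calc frobSq (W * M) ≤ ∑ i, ∑ j, ∑ k, W i k * M k j ^ 2 := by
        unfold frobSq
        gcongr with i _ j _
        exact jensen i j
    _ = frobSq M := by
      rw [Finset.sum_comm, frobSq_eq_sum_col]
      refine Finset.sum_congr rfl fun j _ => ?_
      rw [Finset.sum_comm]
      simp only [← Finset.sum_mul, sum_col_of_mem_doublyStochastic hW, one_mul]

lemma frobSq_one_sub_mul_le_of_mem_doublyStochastic (hW : W ∈ doublyStochastic ℝ (Fin n))
    (M : Matrix (Fin n) (Fin m) ℝ) : frobSq ((1 - W) * M) ≤ 4 * frobSq M := by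
  rw [Matrix.sub_mul, Matrix.one_mul]
  linarith [frobSq_sub_le M (W * M), frobSq_mul_le_of_mem_doublyStochastic hW M]

end DoublyStochastic

noncomputable def averagingMatrix (n : ℕ) : Matrix (Fin n) (Fin n) ℝ :=
  Matrix.of fun _ _ => (n : ℝ)⁻¹

section AveragingMatrix

variable {n m : ℕ}

lemma rowAvg_eq_averagingMatrix_mul (M : Matrix (Fin n) (Fin m) ℝ) :
    rowAvg M = averagingMatrix n * M := by
  ext i j
  simp [rowAvg, averagingMatrix, Matrix.mul_apply, Finset.mul_sum]

lemma averagingMatrix_mul_self : averagingMatrix n * averagingMatrix n = averagingMatrix n := by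
  ext i j
  have : (n : ℝ) ≠ 0 := Nat.cast_ne_zero.2 (Fin.pos i).ne'
  simp only [averagingMatrix, Matrix.mul_apply, Matrix.of_apply, Finset.sum_const,
    Finset.card_univ, Fintype.card_fin, nsmul_eq_mul]
  field_simp

variable {W : Matrix (Fin n) (Fin n) ℝ}

lemma averagingMatrix_mul_of_mem_doublyStochastic (hW : W ∈ doublyStochastic ℝ (Fin n)) :
    averagingMatrix n * W = averagingMatrix n := by
  ext i j
  simp [averagingMatrix, Matrix.mul_apply, ← Finset.mul_sum, sum_col_of_mem_doublyStochastic hW]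

lemma mul_averagingMatrix_of_mem_doublyStochastic (hW : W ∈ doublyStochastic ℝ (Fin n)) :
    W * averagingMatrix n = averagingMatrix n := by
  ext i j
  simp [averagingMatrix, Matrix.mul_apply, ← Finset.sum_mul, sum_row_of_mem_doublyStochastic hW]

lemma consensusError_update (hW : W ∈ doublyStochastic ℝ (Fin n)) (η : ℝ)
    (x y xt : Matrix (Fin n) (Fin m) ℝ) :
    let xp := (1 - η • (1 - W)) * x - η • y + η • ((1 - W) * (x - xt))
    xp - rowAvg xp = (1 - η • (1 - W) - averagingMatrix n) * (x - rowAvg x)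
      + (η • ((1 - W) * (x - xt)) - η • (y - rowAvg y)) := by
  have hJW := averagingMatrix_mul_of_mem_doublyStochastic hW
  have hWJ := mul_averagingMatrix_of_mem_doublyStochastic hW
  have hJJ : averagingMatrix n * averagingMatrix n = averagingMatrix n := averagingMatrix_mul_self
  simp only [rowAvg_eq_averagingMatrix_mul, Matrix.sub_mul, Matrix.mul_sub, Matrix.mul_add,
    Matrix.smul_mul, Matrix.mul_smul, Matrix.one_mul, ← Matrix.mul_assoc, hJW, hWJ, hJJ, smul_sub]
  abel

end AveragingMatrix

lemma frobSq_consensusError_update_le {n m : ℕ} {W : Matrix (Fin n) (Fin n) ℝ}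
    (hW : W ∈ doublyStochastic ℝ (Fin n)) {η ρ : ℝ}
    (hρ : ρ = specNorm (1 - η • (1 - W) - averagingMatrix n)) (hρ0 : 0 < ρ) (hρ1 : ρ < 1)
    (x y xt : Matrix (Fin n) (Fin m) ℝ) :
    let xp := (1 - η • (1 - W)) * x - η • y + η • ((1 - W) * (x - xt))
    frobSq (xp - rowAvg xp) ≤ (1 + ρ ^ 2) / 2 * frobSq (x - rowAvg x)
      + 2 * (1 + ρ ^ 2) * η ^ 2 / (1 - ρ ^ 2) * frobSq (y - rowAvg y)
      + 8 * η ^ 2 * (1 + ρ ^ 2) / (1 - ρ ^ 2) * frobSq (x - xt) := by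
  intro xp
  have hcontract := frobSq_mul_le_specNorm_sq (1 - η • (1 - W) - averagingMatrix n) (x - rowAvg x)
  rw [← hρ] at hcontract
  have hperturb : frobSq (η • ((1 - W) * (x - xt)) - η • (y - rowAvg y))
      ≤ 8 * η ^ 2 * frobSq (x - xt) + 2 * η ^ 2 * frobSq (y - rowAvg y) := by
    have h := frobSq_sub_le (η • ((1 - W) * (x - xt))) (η • (y - rowAvg y))
    rw [frobSq_smul, frobSq_smul] at h
    nlinarith [frobSq_one_sub_mul_le_of_mem_doublyStochastic hW (x - xt), sq_nonneg η]
  have hw_nonneg : 0 ≤ (1 + ρ ^ 2) / (1 - ρ ^ 2) := by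
    have : ρ ^ 2 < 1 := by nlinarith
    exact div_nonneg (by positivity) (by linarith)
  calc frobSq (xp - rowAvg xp)
      ≤ (1 + ρ ^ 2) / 2 * frobSq (x - rowAvg x) + (1 + ρ ^ 2) / (1 - ρ ^ 2)
        * frobSq (η • ((1 - W) * (x - xt)) - η • (y - rowAvg y)) := by
        rw [consensusError_update hW]
        exact frobSq_add_le_of_le_sq_mul hρ0 hρ1 hcontract
    _ ≤ (1 + ρ ^ 2) / 2 * frobSq (x - rowAvg x) + (1 + ρ ^ 2) / (1 - ρ ^ 2)
        * (8 * η ^ 2 * frobSq (x - xt) + 2 * η ^ 2 * frobSq (y - rowAvg y)) := by gcongr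
    _ = _ := by ring

section Integrability

variable {n m : ℕ} {Ω : Type*} [MeasurableSpace Ω] {P : Measure Ω}

lemma integrable_frobSq_of_le {f : Ω → Matrix (Fin n) (Fin m) ℝ} {g : Ω → ℝ}
    (hf : ∀ i j, Measurable fun ω => f ω i j) (hg : Integrable g P)
    (hfg : ∀ ω, frobSq (f ω) ≤ g ω) : Integrable (fun ω => frobSq (f ω)) P := by
  have hmeas : Measurable fun ω => frobSq (f ω) :=
    Finset.measurable_sum _ fun i _ => Finset.measurable_sum _ fun j _ => (hf i j).pow_const 2
  refine hg.mono' hmeas.aestronglyMeasurable (ae_of_all _ fun ω => ?_)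
  rw [Real.norm_of_nonneg (frobSq_nonneg _)]
  exact hfg ω

lemma integrable_frobSq_sub {X Y : Ω → Matrix (Fin n) (Fin m) ℝ}
    (hXmeas : ∀ i j, Measurable fun ω => X ω i j) (hYmeas : ∀ i j, Measurable fun ω => Y ω i j)
    (hXint : Integrable (fun ω => frobSq (X ω)) P) (hYint : Integrable (fun ω => frobSq (Y ω)) P) :
    Integrable (fun ω => frobSq (X ω - Y ω)) P :=
  integrable_frobSq_of_le (fun i j => (hXmeas i j).sub (hYmeas i j))
    ((hXint.const_mul 2).add (hYint.const_mul 2)) fun _ => frobSq_sub_le _ _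

lemma integrable_frobSq_sub_rowAvg {X : Ω → Matrix (Fin n) (Fin m) ℝ}
    (hXmeas : ∀ i j, Measurable fun ω => X ω i j) (hXint : Integrable (fun ω => frobSq (X ω)) P) :
    Integrable (fun ω => frobSq (X ω - rowAvg (X ω))) P := by
  have hmeas : ∀ i j, Measurable fun ω => rowAvg (X ω) i j := fun _ j =>
    measurable_const.mul (Finset.measurable_sum _ fun k _ => hXmeas k j)
  exact integrable_frobSq_sub hXmeas hmeas hXint
    (integrable_frobSq_of_le hmeas hXint fun _ => frobSq_rowAvg_le _)

end Integrability

theorem statement10_general {n m : ℕ}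
    {Ω : Type*} [MeasurableSpace Ω] (P : Measure Ω)
    (W : Matrix (Fin n) (Fin n) ℝ)
    (hWnn : ∀ i j, 0 ≤ W i j) (hWsymm : W.transpose = W)
    (hWrow : ∀ i, ∑ j, W i j = 1)
    (η : ℝ)
    (ρη : ℝ)
    (hρη : ρη = specNorm ((1 : Matrix (Fin n) (Fin n) ℝ) - η • (1 - W) -
      Matrix.of fun _ _ => (n : ℝ)⁻¹))
    (hρ0 : 0 < ρη) (hρ1 : ρη < 1)
    (ωc : ℝ)
    (X Y H Xtil : Ω → Matrix (Fin n) (Fin m) ℝ)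
    (hXmeas : ∀ i j, Measurable fun ω => X ω i j)
    (hYmeas : ∀ i j, Measurable fun ω => Y ω i j)
    (hXtmeas : ∀ i j, Measurable fun ω => Xtil ω i j)
    (hXint : Integrable (fun ω => frobSq (X ω)) P)
    (hYint : Integrable (fun ω => frobSq (Y ω)) P)
    (hXtint : Integrable (fun ω => frobSq (Xtil ω)) P)
    (hcomp : ∫ ω, frobSq (X ω - Xtil ω) ∂P ≤ ωc * ∫ ω, frobSq (X ω - H ω) ∂P)
    (Xp : Ω → Matrix (Fin n) (Fin m) ℝ)
    (hXp : ∀ ω, Xp ω = (1 - η • (1 - W)) * X ω - η • Y ω +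
      η • ((1 - W) * (X ω - Xtil ω))) :
    ∫ ω, frobSq (Xp ω - rowAvg (Xp ω)) ∂P ≤
      (1 + ρη ^ 2) / 2 * ∫ ω, frobSq (X ω - rowAvg (X ω)) ∂P +
        2 * (1 + ρη ^ 2) * η ^ 2 / (1 - ρη ^ 2) *
          ∫ ω, frobSq (Y ω - rowAvg (Y ω)) ∂P +
        8 * η ^ 2 * ωc * (1 + ρη ^ 2) / (1 - ρη ^ 2) *
          ∫ ω, frobSq (X ω - H ω) ∂P := by
  have hW : W ∈ doublyStochastic ℝ (Fin n) := by
    refine mem_doublyStochastic_iff_sum.2 ⟨hWnn, hWrow, fun j => ?_⟩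
    have h := hWrow j
    rwa [← hWsymm] at h
  have hc3 : 0 ≤ 8 * η ^ 2 * (1 + ρη ^ 2) / (1 - ρη ^ 2) :=
    div_nonneg (by positivity) (by nlinarith)
  have iX := (integrable_frobSq_sub_rowAvg hXmeas hXint).const_mul ((1 + ρη ^ 2) / 2)
  have iY := (integrable_frobSq_sub_rowAvg hYmeas hYint).const_mul
    (2 * (1 + ρη ^ 2) * η ^ 2 / (1 - ρη ^ 2))
  have iXt := (integrable_frobSq_sub hXmeas hXtmeas hXint hXtint).const_mul
    (8 * η ^ 2 * (1 + ρη ^ 2) / (1 - ρη ^ 2))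
  calc ∫ ω, frobSq (Xp ω - rowAvg (Xp ω)) ∂P
      ≤ ∫ ω, ((1 + ρη ^ 2) / 2 * frobSq (X ω - rowAvg (X ω))
          + 2 * (1 + ρη ^ 2) * η ^ 2 / (1 - ρη ^ 2) * frobSq (Y ω - rowAvg (Y ω))
          + 8 * η ^ 2 * (1 + ρη ^ 2) / (1 - ρη ^ 2) * frobSq (X ω - Xtil ω)) ∂P :=
        integral_mono_of_nonneg (ae_of_all _ fun _ => frobSq_nonneg _) ((iX.add iY).add iXt)
          (ae_of_all _ fun ω => by
            beta_reduce
            rw [hXp ω]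
            exact frobSq_consensusError_update_le hW hρη hρ0 hρ1 _ _ _)
    _ = (1 + ρη ^ 2) / 2 * ∫ ω, frobSq (X ω - rowAvg (X ω)) ∂P
          + 2 * (1 + ρη ^ 2) * η ^ 2 / (1 - ρη ^ 2) * ∫ ω, frobSq (Y ω - rowAvg (Y ω)) ∂P
          + 8 * η ^ 2 * (1 + ρη ^ 2) / (1 - ρη ^ 2) * ∫ ω, frobSq (X ω - Xtil ω) ∂P := by
        rw [integral_add ?_ iXt, integral_add iX iY, integral_const_mul, integral_const_mul,
          integral_const_mul]
        exact iX.add iY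
    _ ≤ _ := by
        gcongr _ + ?_
        exact (mul_le_mul_of_nonneg_left hcomp hc3).trans_eq (by ring)

/-- Consensus contraction of the compressed decision-variable
update: with `W_η = I − η(I − W)`, `ρ_η = ‖W_η − (1/n)𝟙𝟙ᵀ‖ ∈ (0,1)`,
`w₁ = 1 + ρ_η²`, `w₂ = 1 − ρ_η²`, compression error
`E‖X − X̃‖² ≤ ω E‖X − H‖²`, and `X⁺ = W_η X − η Y + η (I − W)(X − X̃)`:
`E‖X⁺ − X̄⁺‖² ≤ (w₁/2) E‖X − X̄‖² + (2w₁η²/w₂) E‖Y − Ȳ‖² + (8η²ωw₁/w₂) E‖X − H‖²`. -/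
theorem statement10 {n m : ℕ} (hn : 0 < n)
    {Ω : Type*} [MeasurableSpace Ω] (P : Measure Ω) [IsProbabilityMeasure P]
    (W : Matrix (Fin n) (Fin n) ℝ)
    (hWnn : ∀ i j, 0 ≤ W i j) (hWsymm : W.transpose = W)
    (hWrow : ∀ i, ∑ j, W i j = 1)
    (η : ℝ) (hη : 0 < η)
    (ρη : ℝ)
    (hρη : ρη = specNorm ((1 : Matrix (Fin n) (Fin n) ℝ) - η • (1 - W) -
      Matrix.of fun _ _ => (n : ℝ)⁻¹))
    (hρ0 : 0 < ρη) (hρ1 : ρη < 1)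
    (ωc : ℝ) (hωc : 0 ≤ ωc)
    (X Y H Xtil : Ω → Matrix (Fin n) (Fin m) ℝ)
    (hXmeas : ∀ i j, Measurable fun ω => X ω i j)
    (hYmeas : ∀ i j, Measurable fun ω => Y ω i j)
    (hHmeas : ∀ i j, Measurable fun ω => H ω i j)
    (hXtmeas : ∀ i j, Measurable fun ω => Xtil ω i j)
    (hXint : Integrable (fun ω => frobSq (X ω)) P)
    (hYint : Integrable (fun ω => frobSq (Y ω)) P)
    (hHint : Integrable (fun ω => frobSq (H ω)) P)
    (hXtint : Integrable (fun ω => frobSq (Xtil ω)) P)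
    (hcomp : ∫ ω, frobSq (X ω - Xtil ω) ∂P ≤ ωc * ∫ ω, frobSq (X ω - H ω) ∂P)
    (Xp : Ω → Matrix (Fin n) (Fin m) ℝ)
    (hXp : ∀ ω, Xp ω = (1 - η • (1 - W)) * X ω - η • Y ω +
      η • ((1 - W) * (X ω - Xtil ω))) :
    ∫ ω, frobSq (Xp ω - rowAvg (Xp ω)) ∂P ≤
      (1 + ρη ^ 2) / 2 * ∫ ω, frobSq (X ω - rowAvg (X ω)) ∂P +
        2 * (1 + ρη ^ 2) * η ^ 2 / (1 - ρη ^ 2) *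
          ∫ ω, frobSq (Y ω - rowAvg (Y ω)) ∂P +
        8 * η ^ 2 * ωc * (1 + ρη ^ 2) / (1 - ρη ^ 2) *
          ∫ ω, frobSq (X ω - H ω) ∂P :=
  statement10_general P W hWnn hWsymm hWrow η ρη hρη hρ0 hρ1 ωc X Y H Xtil hXmeas hYmeas hXtmeas
    hXint hYint hXtint hcomp Xp hXp
end

section
/- Let L, μ > 0, let m, n ≥ 1 be integers, let ω ∈ [0,1], r ∈ (0,1), τ_x, τ_y > 1 and α_x, α_y ∈ (0,1), and assume b_x := τ_x(1 − α_x(1 − ω)) < 1 and b_y := τ_y(1 − α_y(1 − ω)) < 1. Set w₁ := 1 + r², w₂ := 1 − r², a_x := (12τ_x/(τ_x − 1))·(1/12 + L²(8m + 33)), a_y := 3τ_y/(τ_y − 1), c₁ := (30(m+4)L²w₁ + 2w₁)/w₂, c₂ := (96w₁w₂L² + 16(m+4)w₁²)/w₂², c₃ := 20nL²(m+4)w₁/w₂, c₄ := (64w₁²(m+4) + 96w₁w₂)·L²ω/w₂², c₅ := (L/(4n))·((4m+5)/√(m+4) + (4m+4)L/μ), c₆ := ((15(m+4)L² + 1)/6)·a_y,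 c₇ := ((w₁ + w₂)/w₂)·a_y, c₈ := (5nL²(m+4)/3)·a_y. For η > 0 let G(η) be the 5×5 matrix with row 1 = (w₁/2, 2w₁η²/w₂, 0, 8ωw₁η²/w₂, 0), row 2 = (c₁, w₁/2 + c₂η², c₃, c₄η², 8w₁ωη²/w₂), row 3 = (c₅η, 0, 1 − 2μη/3, 0, 0), row 4 = (2a_x, a_xη², n·a_x, b_x + a_xωη², 0), row 5 = (c₆, c₇, c₈, c₇ω, b_y + a_yωη). Then there exists η* > 0 such that for every η ∈ (0, η*], the spectral radius of G(η) satisfies 0 < ρ(G(η)) < 1. -/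
/-!
At `η = 0` the matrix is block lower triangular (order the coordinates as 1, 3, 2, 4, 5) with
diagonal `(w₁/2, 1, w₁/2, b_x, b_y)`, so `det G(0) ≠ 0`, and by continuity `ρ(G(η)) > 0` for small
`η`. For the upper bound, `G(η)` is entrywise nonnegative, and a nonnegative matrix with `G v < v`
for some positive vector `v` has `ρ(G) < 1`: conjugating by `diag v` makes its `ℓ^∞` operator
norm less than one. Take `v = (ε³, ε, ε², ε, 1)`: for small `ε` the strict inequality holds at
`η = 0` in every row but the third, whose diagonal entry is `1`, and persists for small `η`; in the
third row the decrease `2μη/3` of the diagonal entry beats the new term `c₅ η ε` once `c₅ ε < 2μ/3`.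
-/

open scoped ENNReal

/-- Spectral radius of a real square matrix: the maximum modulus of its (complex)
eigenvalues, obtained as the spectral radius of the complexified matrix. -/
noncomputable def specRad {d : ℕ} (M : Matrix (Fin d) (Fin d) ℝ) : ℝ≥0∞ :=
  spectralRadius ℂ (M.map Complex.ofReal)

open Matrix Filter Topology

section SpectralRadius

attribute [local instance] Matrix.linftyOpNormedRing Matrix.linftyOpNormedAlgebra

variable {d : ℕ}

lemma specRad_units_conjugate (u : (Matrix (Fin d) (Fin d) ℝ)ˣ) (M : Matrix (Fin d) (Fin d) ℝ) :
    specRad (((u⁻¹ : _ˣ) : Matrix (Fin d) (Fin d) ℝ) * M * (u : Matrix (Fin d) (Fin d) ℝ)) =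
      specRad M := by
  let v := Units.map (Complex.ofRealHom.mapMatrix : Matrix (Fin d) (Fin d) ℝ →+* _).toMonoidHom u
  have hconj : Complex.ofRealHom.mapMatrix
        (((u⁻¹ : _ˣ) : Matrix (Fin d) (Fin d) ℝ) * M * (u : Matrix (Fin d) (Fin d) ℝ)) =
      ((v⁻¹ : _ˣ) : Matrix (Fin d) (Fin d) ℂ) * M.map Complex.ofReal *
        (v : Matrix (Fin d) (Fin d) ℂ) := by
    simp only [v, map_mul, Units.coe_map, Units.coe_map_inv]
    rfl
  change spectralRadius ℂ (Complex.ofRealHom.mapMatrix _) = _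
  rw [hconj]
  unfold spectralRadius
  rw [spectrum.units_conjugate']
  rfl

lemma specRad_le_linfty_opNNNorm [NeZero d] (M : Matrix (Fin d) (Fin d) ℝ) :
    specRad M ≤ ‖M‖₊ := by
  have : ‖M.map Complex.ofReal‖₊ = ‖M‖₊ := by
    simp [linfty_opNNNorm_def]
  exact this ▸ spectrum.spectralRadius_le_nnnorm _

lemma specRad_pos_of_det_ne_zero [NeZero d] {M : Matrix (Fin d) (Fin d) ℝ}
    (h : M.det ≠ 0) : 0 < specRad M := by
  have hdet : (M.map Complex.ofReal).det = M.det := (Complex.ofRealHom.map_det M).symm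
  have hunit : IsUnit (M.map Complex.ofReal) := by
    rw [isUnit_iff_isUnit_det, hdet]
    exact isUnit_iff_ne_zero.2 (Complex.ofReal_ne_zero.2 h)
  obtain ⟨k, hk⟩ := spectrum.nonempty (M.map Complex.ofReal)
  have hk0 : k ≠ 0 := by
    rintro rfl
    exact (spectrum.zero_mem_iff ℂ).1 hk hunit
  exact (by simpa using hk0 : (0 : ℝ≥0∞) < ‖k‖₊).trans_le (le_iSup₂ (α := ℝ≥0∞) k hk)

lemma specRad_lt_one_of_mulVec_lt [NeZero d] {M : Matrix (Fin d) (Fin d) ℝ}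
    (hM : ∀ i j, 0 ≤ M i j) {w : Fin d → ℝ} (hw : ∀ i, 0 < w i)
    (h : ∀ i, (M *ᵥ w) i < w i) : specRad M < 1 := by
  let u : (Matrix (Fin d) (Fin d) ℝ)ˣ :=
    ⟨diagonal w, diagonal w⁻¹, by simp [fun i => (hw i).ne'], by simp [fun i => (hw i).ne']⟩
  have hconj : ((u⁻¹ : _ˣ) : Matrix (Fin d) (Fin d) ℝ) * M * (u : Matrix (Fin d) (Fin d) ℝ) =
      of fun i j => (w i)⁻¹ * M i j * w j := by
    ext i j
    change (diagonal w⁻¹ * M * diagonal w) i j = _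
    rw [mul_diagonal, diagonal_mul]
    rfl
  rw [← specRad_units_conjugate u, hconj]
  refine (specRad_le_linfty_opNNNorm _).trans_lt ?_
  rw [← ENNReal.coe_one, ENNReal.coe_lt_coe, linfty_opNNNorm_def,
    Finset.sup_lt_iff zero_lt_one]
  intro i _
  rw [← NNReal.coe_lt_coe, NNReal.coe_sum]
  calc ∑ j, ‖(w i)⁻¹ * M i j * w j‖ = (w i)⁻¹ * (M *ᵥ w) i := by
        rw [mulVec, dotProduct, Finset.mul_sum]
        refine Finset.sum_congr rfl fun j _ => ?_
        have := hw i; have := hw j; have := hM i j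
        rw [Real.norm_eq_abs, abs_of_nonneg (by positivity), mul_assoc]
    _ < (w i)⁻¹ * w i := mul_lt_mul_of_pos_left (h i) (inv_pos.2 (hw i))
    _ = 1 := inv_mul_cancel₀ (hw i).ne'

end SpectralRadius

lemma mul_one_sub_mul_one_sub_pos {τ α ω : ℝ} (hτ : 0 < τ) (hα₀ : 0 ≤ α) (hα₁ : α < 1)
    (hω : 0 ≤ ω) : 0 < τ * (1 - α * (1 - ω)) :=
  mul_pos hτ (by nlinarith)

section ErrorMatrix

variable (w1 w2 ω μ : ℝ) (n : ℕ) (ax ay bx bY c1 c2 c3 c4 c5 c6 c7 c8 : ℝ)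

noncomputable def errorMatrix (η : ℝ) : Matrix (Fin 5) (Fin 5) ℝ :=
  !![w1 / 2, 2 * w1 * η ^ 2 / w2, 0, 8 * ω * w1 * η ^ 2 / w2, 0;
     c1, w1 / 2 + c2 * η ^ 2, c3, c4 * η ^ 2, 8 * w1 * ω * η ^ 2 / w2;
     c5 * η, 0, 1 - 2 * μ * η / 3, 0, 0;
     2 * ax, ax * η ^ 2, (n : ℝ) * ax, bx + ax * ω * η ^ 2, 0;
     c6, c7, c8, c7 * ω, bY + ay * ω * η]

def weights (ε : ℝ) : Fin 5 → ℝ := ![ε ^ 3, ε, ε ^ 2, ε, 1]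

lemma weights_pos {ε : ℝ} (hε : 0 < ε) (i : Fin 5) : 0 < weights ε i := by
  fin_cases i <;> simp [weights] <;> positivity

local notation "𝒢" => errorMatrix w1 w2 ω μ n ax ay bx bY c1 c2 c3 c4 c5 c6 c7 c8

lemma continuous_errorMatrix : Continuous 𝒢 := by
  refine continuous_matrix fun i j => ?_
  fin_cases i <;> fin_cases j <;> simp [errorMatrix] <;> fun_prop

lemma det_errorMatrix_zero : (𝒢 0).det = (w1 / 2) ^ 2 * bx * bY := by
  simp [errorMatrix, det_succ_row_zero, Fin.sum_univ_succ,
    (by decide : Fin.succAbove (1 : Fin 4) (2 : Fin 3) = 3)]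
  ring

variable {w1 w2 ω μ ax ay bx bY c1 c2 c3 c4 c5 c6 c7 c8} {n}

lemma errorMatrix_nonneg (hw1 : 0 ≤ w1) (hw2 : 0 ≤ w2) (hω : 0 ≤ ω) (hax : 0 ≤ ax)
    (hay : 0 ≤ ay) (hbx : 0 ≤ bx) (hbY : 0 ≤ bY) (hc1 : 0 ≤ c1) (hc2 : 0 ≤ c2) (hc3 : 0 ≤ c3)
    (hc4 : 0 ≤ c4) (hc5 : 0 ≤ c5) (hc6 : 0 ≤ c6) (hc7 : 0 ≤ c7) (hc8 : 0 ≤ c8) {η : ℝ}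
    (hη : 0 ≤ η) (hημ : 2 * μ * η / 3 ≤ 1) (i j : Fin 5) : 0 ≤ 𝒢 η i j := by
  fin_cases i <;> fin_cases j <;> simp [errorMatrix] <;> first | positivity | linarith

lemma errorMatrix_mulVec_weights_two_lt {η ε : ℝ} (hη : 0 < η) (hε : 0 < ε)
    (hc5 : c5 * ε < 2 * μ / 3) : (𝒢 η *ᵥ weights ε) 2 < weights ε 2 := by
  have : 0 < η * ε ^ 2 * (2 * μ / 3 - c5 * ε) := by have := sub_pos.2 hc5; positivity
  simp only [mulVec, dotProduct, errorMatrix, weights, Fin.sum_univ_five, of_apply, cons_val',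
    cons_val_fin_one, cons_val, cons_val_one, cons_val_zero, zero_mul, add_zero, mul_one]
  nlinarith

lemma exists_mulVec_errorMatrix_zero_lt_weights (hw1 : w1 < 2) (hbx : bx < 1) (hbY : bY < 1)
    (hμ : 0 < μ) : ∃ ε > 0, c5 * ε < 2 * μ / 3 ∧
      ∀ i ≠ 2, (𝒢 0 *ᵥ weights ε) i < weights ε i := by
  have h1 : ∀ᶠ ε in 𝓝 0, c1 * ε ^ 2 + c3 * ε + w1 / 2 < 1 :=
    ContinuousAt.eventually_lt (by fun_prop) (by fun_prop) (by linarith)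
  have h3 : ∀ᶠ ε in 𝓝 0, 2 * ax * ε ^ 2 + n * ax * ε + bx < 1 :=
    ContinuousAt.eventually_lt (by fun_prop) (by fun_prop) (by simpa)
  have h4 : ∀ᶠ ε in 𝓝 0, c6 * ε ^ 3 + c8 * ε ^ 2 + c7 * ε + c7 * ω * ε + bY < 1 :=
    ContinuousAt.eventually_lt (by fun_prop) (by fun_prop) (by simpa)
  have h5 : ∀ᶠ ε in 𝓝 0, c5 * ε < 2 * μ / 3 :=
    ContinuousAt.eventually_lt (by fun_prop) (by fun_prop) (by rw [mul_zero]; positivity)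
  obtain ⟨ε, ⟨h1, h3, h4, h5⟩, hε⟩ :=
    ((eventually_nhdsWithin_of_eventually_nhds (h1.and (h3.and (h4.and h5)))).and
      (self_mem_nhdsWithin (s := Set.Ioi (0 : ℝ)))).exists
  refine ⟨ε, hε, h5, fun i hi => ?_⟩
  fin_cases i <;> simp [errorMatrix, weights, mulVec, dotProduct, Fin.sum_univ_five] at hi ⊢ <;>
    nlinarith [pow_pos hε 3]

theorem exists_forall_specRad_errorMatrix_mem_Ioo (hw1 : 0 < w1) (hw1_lt : w1 < 2) (hw2 : 0 ≤ w2)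
    (hω : 0 ≤ ω) (hμ : 0 < μ) (hax : 0 ≤ ax) (hay : 0 ≤ ay) (hbx : 0 < bx) (hbx_lt : bx < 1)
    (hbY : 0 < bY) (hbY_lt : bY < 1) (hc1 : 0 ≤ c1) (hc2 : 0 ≤ c2) (hc3 : 0 ≤ c3) (hc4 : 0 ≤ c4)
    (hc5 : 0 ≤ c5) (hc6 : 0 ≤ c6) (hc7 : 0 ≤ c7) (hc8 : 0 ≤ c8) :
    ∃ ηstar : ℝ, 0 < ηstar ∧ ∀ η : ℝ, 0 < η → η ≤ ηstar →
      0 < specRad (𝒢 η) ∧ specRad (𝒢 η) < 1 := by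
  obtain ⟨ε, hε, hc5ε, hrows₀⟩ : ∃ ε > 0, c5 * ε < 2 * μ / 3 ∧
      ∀ i ≠ 2, (𝒢 0 *ᵥ weights ε) i < weights ε i :=
    exists_mulVec_errorMatrix_zero_lt_weights hw1_lt hbx_lt hbY_lt hμ
  have hcont : Continuous 𝒢 := continuous_errorMatrix ..
  have hdet : ∀ᶠ η in 𝓝 0, (𝒢 η).det ≠ 0 :=
    hcont.matrix_det.continuousAt.eventually_ne (by rw [det_errorMatrix_zero]; positivity)
  have hμη : ∀ᶠ η in 𝓝 (0 : ℝ), 2 * μ * η / 3 < 1 :=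
    ContinuousAt.eventually_lt (by fun_prop) (by fun_prop) (by simp)
  have hrows : ∀ᶠ η in 𝓝 0, ∀ i ≠ 2, (𝒢 η *ᵥ weights ε) i < weights ε i :=
    (Set.toFinite {i : Fin 5 | i ≠ 2}).eventually_all.2 fun i hi =>
      ((continuous_apply i).comp (hcont.matrix_mulVec continuous_const)).continuousAt.eventually_lt
        continuousAt_const (hrows₀ i hi)
  have hall : ∀ᶠ η in 𝓝[>] 0, 0 < specRad (𝒢 η) ∧ specRad (𝒢 η) < 1 := by
    filter_upwards [eventually_nhdsWithin_of_eventually_nhds (hdet.and (hμη.and hrows)),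
      self_mem_nhdsWithin] with η ⟨hdetη, hημ, hrowsη⟩ (hη : 0 < η)
    refine ⟨specRad_pos_of_det_ne_zero hdetη, specRad_lt_one_of_mulVec_lt
      (errorMatrix_nonneg hw1.le hw2 hω hax hay hbx.le hbY.le hc1 hc2 hc3 hc4 hc5 hc6 hc7 hc8
        hη.le hημ.le) (weights_pos hε) fun i => ?_⟩
    by_cases hi : i = 2
    · exact hi ▸ errorMatrix_mulVec_weights_two_lt hη hε hc5ε
    · exact hrowsη i hi
  obtain ⟨ηstar, hpos, hsub⟩ := mem_nhdsGT_iff_exists_Ioc_subset.1 hall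
  exact ⟨ηstar, hpos, fun η h0 h1 => hsub ⟨h0, h1⟩⟩

end ErrorMatrix

theorem statement15_general (L μ : ℝ) (hL : 0 < L) (hμ : 0 < μ)
    (m n : ℕ)
    (ωc : ℝ) (hωc0 : 0 ≤ ωc)
    (r : ℝ) (hr0 : 0 < r) (hr1 : r < 1)
    (τx τy : ℝ) (hτx : 1 < τx) (hτy : 1 < τy)
    (αx αy : ℝ) (hαx0 : 0 < αx) (hαx1 : αx < 1) (hαy0 : 0 < αy) (hαy1 : αy < 1)
    (bx bY : ℝ) (hbx : bx = τx * (1 - αx * (1 - ωc)))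
    (hbY : bY = τy * (1 - αy * (1 - ωc)))
    (hbx1 : bx < 1) (hbY1 : bY < 1)
    (w1 w2 ax ay c1 c2 c3 c4 c5 c6 c7 c8 : ℝ)
    (hw1 : w1 = 1 + r ^ 2) (hw2 : w2 = 1 - r ^ 2)
    (hax : ax = 12 * τx / (τx - 1) * (1 / 12 + L ^ 2 * (8 * (m : ℝ) + 33)))
    (hay : ay = 3 * τy / (τy - 1))
    (hc1 : c1 = (30 * ((m : ℝ) + 4) * L ^ 2 * w1 + 2 * w1) / w2)
    (hc2 : c2 = (96 * w1 * w2 * L ^ 2 + 16 * ((m : ℝ) + 4) * w1 ^ 2) / w2 ^ 2)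
    (hc3 : c3 = 20 * (n : ℝ) * L ^ 2 * ((m : ℝ) + 4) * w1 / w2)
    (hc4 : c4 = (64 * w1 ^ 2 * ((m : ℝ) + 4) + 96 * w1 * w2) * L ^ 2 * ωc / w2 ^ 2)
    (hc5 : c5 = L / (4 * (n : ℝ)) *
      ((4 * (m : ℝ) + 5) / Real.sqrt ((m : ℝ) + 4) + (4 * (m : ℝ) + 4) * L / μ))
    (hc6 : c6 = (15 * ((m : ℝ) + 4) * L ^ 2 + 1) / 6 * ay)
    (hc7 : c7 = (w1 + w2) / w2 * ay)
    (hc8 : c8 = 5 * (n : ℝ) * L ^ 2 * ((m : ℝ) + 4) / 3 * ay)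
    (G : ℝ → Matrix (Fin 5) (Fin 5) ℝ)
    (hG : ∀ η, G η =
      !![w1 / 2, 2 * w1 * η ^ 2 / w2, 0, 8 * ωc * w1 * η ^ 2 / w2, 0;
         c1, w1 / 2 + c2 * η ^ 2, c3, c4 * η ^ 2, 8 * w1 * ωc * η ^ 2 / w2;
         c5 * η, 0, 1 - 2 * μ * η / 3, 0, 0;
         2 * ax, ax * η ^ 2, (n : ℝ) * ax, bx + ax * ωc * η ^ 2, 0;
         c6, c7, c8, c7 * ωc, bY + ay * ωc * η]) :
    ∃ ηstar : ℝ, 0 < ηstar ∧ ∀ η : ℝ, 0 < η → η ≤ ηstar →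
      0 < specRad (G η) ∧ specRad (G η) < 1 := by
  have hr : r ^ 2 < 1 := by nlinarith
  have hw1p : 0 < w1 := by rw [hw1]; positivity
  have hw2p : 0 < w2 := by rw [hw2]; linarith
  have hτx' : 0 < τx - 1 := by linarith
  have hτy' : 0 < τy - 1 := by linarith
  have hayp : 0 ≤ ay := by rw [hay]; positivity
  have hbxp : 0 < bx := hbx ▸ mul_one_sub_mul_one_sub_pos (by linarith) hαx0.le hαx1 hωc0
  have hbYp : 0 < bY := hbY ▸ mul_one_sub_mul_one_sub_pos (by linarith) hαy0.le hαy1 hωc0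
  obtain rfl : G = errorMatrix w1 w2 ωc μ n ax ay bx bY c1 c2 c3 c4 c5 c6 c7 c8 := funext hG
  exact exists_forall_specRad_errorMatrix_mem_Ioo hw1p (by rw [hw1]; linarith) hw2p.le hωc0 hμ
    (by rw [hax]; positivity) hayp hbxp hbx1 hbYp hbY1
    (by rw [hc1]; positivity) (by rw [hc2]; positivity) (by rw [hc3]; positivity)
    (by rw [hc4]; positivity) (by rw [hc5]; positivity) (by rw [hc6]; positivity)
    (by rw [hc7]; positivity) (by rw [hc8]; positivity)

/-- For the 5×5 coefficient matrix `G(η)` of the OCGT-BF error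
system, there exists `η* > 0` such that `0 < ρ(G(η)) < 1` for every `η ∈ (0, η*]`. -/
theorem statement15 (L μ : ℝ) (hL : 0 < L) (hμ : 0 < μ)
    (m n : ℕ) (hm : 1 ≤ m) (hn : 1 ≤ n)
    (ωc : ℝ) (hωc0 : 0 ≤ ωc) (hωc1 : ωc ≤ 1)
    (r : ℝ) (hr0 : 0 < r) (hr1 : r < 1)
    (τx τy : ℝ) (hτx : 1 < τx) (hτy : 1 < τy)
    (αx αy : ℝ) (hαx0 : 0 < αx) (hαx1 : αx < 1) (hαy0 : 0 < αy) (hαy1 : αy < 1)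
    (bx bY : ℝ) (hbx : bx = τx * (1 - αx * (1 - ωc)))
    (hbY : bY = τy * (1 - αy * (1 - ωc)))
    (hbx1 : bx < 1) (hbY1 : bY < 1)
    (w1 w2 ax ay c1 c2 c3 c4 c5 c6 c7 c8 : ℝ)
    (hw1 : w1 = 1 + r ^ 2) (hw2 : w2 = 1 - r ^ 2)
    (hax : ax = 12 * τx / (τx - 1) * (1 / 12 + L ^ 2 * (8 * (m : ℝ) + 33)))
    (hay : ay = 3 * τy / (τy - 1))
    (hc1 : c1 = (30 * ((m : ℝ) + 4) * L ^ 2 * w1 + 2 * w1) / w2)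
    (hc2 : c2 = (96 * w1 * w2 * L ^ 2 + 16 * ((m : ℝ) + 4) * w1 ^ 2) / w2 ^ 2)
    (hc3 : c3 = 20 * (n : ℝ) * L ^ 2 * ((m : ℝ) + 4) * w1 / w2)
    (hc4 : c4 = (64 * w1 ^ 2 * ((m : ℝ) + 4) + 96 * w1 * w2) * L ^ 2 * ωc / w2 ^ 2)
    (hc5 : c5 = L / (4 * (n : ℝ)) *
      ((4 * (m : ℝ) + 5) / Real.sqrt ((m : ℝ) + 4) + (4 * (m : ℝ) + 4) * L / μ))
    (hc6 : c6 = (15 * ((m : ℝ) + 4) * L ^ 2 + 1) / 6 * ay)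
    (hc7 : c7 = (w1 + w2) / w2 * ay)
    (hc8 : c8 = 5 * (n : ℝ) * L ^ 2 * ((m : ℝ) + 4) / 3 * ay)
    (G : ℝ → Matrix (Fin 5) (Fin 5) ℝ)
    (hG : ∀ η, G η =
      !![w1 / 2, 2 * w1 * η ^ 2 / w2, 0, 8 * ωc * w1 * η ^ 2 / w2, 0;
         c1, w1 / 2 + c2 * η ^ 2, c3, c4 * η ^ 2, 8 * w1 * ωc * η ^ 2 / w2;
         c5 * η, 0, 1 - 2 * μ * η / 3, 0, 0;
         2 * ax, ax * η ^ 2, (n : ℝ) * ax, bx + ax * ωc * η ^ 2, 0;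
         c6, c7, c8, c7 * ωc, bY + ay * ωc * η]) :
    ∃ ηstar : ℝ, 0 < ηstar ∧ ∀ η : ℝ, 0 < η → η ≤ ηstar →
      0 < specRad (G η) ∧ specRad (G η) < 1 :=
  statement15_general L μ hL hμ m n ωc hωc0 r hr0 hr1 τx τy hτx hτy αx αy hαx0 hαx1 hαy0 hαy1 bx bY
    hbx hbY hbx1 hbY1 w1 w2 ax ay c1 c2 c3 c4 c5 c6 c7 c8 hw1 hw2 hax hay hc1 hc2 hc3 hc4 hc5 hc6
    hc7 hc8 G hG
end
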